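/- arXiv:2305.12023 — 2 statements merged into one kernel-verified Lean document; each statement's English description precedes it below -/
import Mathlib

section
/- For every integer k ≥ 1, if a symmetric n×n 0,1-matrix M has no k-wide symmetric division, then stw(M) ≤ 32(k+1)³. -/
open Finset

noncomputable section
open scoped Classical
set_option linter.unusedSectionVars false
set_option linter.unusedVariables false

namespace StretchPaper

/-! ### Partitions, red graphs, component twin-width and stretch-width of graphs -/

variable {V : Type} [Fintype V] [DecidableEq V]

/-- Two parts are inhomogeneous in `G`. -/
def Inhomog (G : SimpleGraph V) (X Y : Finset V) : Prop :=
  (∃ x ∈ X, ∃ y ∈ Y, G.Adj x y) ∧ (∃ x ∈ X, ∃ y ∈ Y, ¬ G.Adj x y)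

lemma Inhomog.symm {G : SimpleGraph V} {X Y : Finset V} (h : Inhomog G X Y) :
    Inhomog G Y X := by
  obtain ⟨⟨x, hx, y, hy, hxy⟩, ⟨x', hx', y', hy', hxy'⟩⟩ := h
  exact ⟨⟨y, hy, x, hx, hxy.symm⟩, ⟨y', hy', x', hx', fun hc => hxy' hc.symm⟩⟩

/-- `P` is obtained from `Q` by merging two parts. -/
def MergeStep (Q P : Finpartition (Finset.univ : Finset V)) : Prop :=
  ∃ A ∈ Q.parts, ∃ B ∈ Q.parts, A ≠ B ∧
    P.parts = insert (A ∪ B) ((Q.parts.erase A).erase B)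

/-- `l = [P_n, …, P_1]` is a partition sequence: it starts at the partition into
singletons, ends at the partition with the single part `univ`, and each partition is
obtained from the previous one by merging two parts. -/
def IsPartitionSeq (l : List (Finpartition (Finset.univ : Finset V))) : Prop :=
  (∃ P, l.head? = some P ∧ ∀ X ∈ P.parts, X.card = 1) ∧
  (∃ P, l.getLast? = some P ∧ P.parts = {Finset.univ}) ∧
  l.Chain' MergeStep

/-- The red graph of a partition: parts are vertices, inhomogeneous pairs are edges. -/
def redGraph (G : SimpleGraph V) (P : Finpartition (Finset.univ : Finset V)) :
    SimpleGraph {X : Finset V // X ∈ P.parts} where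
  Adj X Y := X ≠ Y ∧ Inhomog G X.1 Y.1
  symm := ⟨fun X Y h => ⟨h.1.symm, h.2.symm⟩⟩
  loopless := ⟨fun X h => h.1 rfl⟩

/-- The largest number of parts contained in a single connected component of the red graph. -/
def maxRedComponentSize (G : SimpleGraph V) (P : Finpartition (Finset.univ : Finset V)) : ℕ :=
  Finset.univ.sup fun X : {X : Finset V // X ∈ P.parts} =>
    (Finset.univ.filter fun Y => (redGraph G P).Reachable X Y).card

/-- Component twin-width. -/
def ctww (G : SimpleGraph V) : ℕ :=
  sInf { k | ∃ l, IsPartitionSeq l ∧ ∀ P ∈ l, maxRedComponentSize G P ≤ k }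

section Ord
variable [LinearOrder V]

/-- The convex closure (span) of a set of vertices along the linear order. -/
def conv (X : Finset V) : Finset V :=
  Finset.univ.filter fun v => (∃ a ∈ X, a ≤ v) ∧ ∃ b ∈ X, v ≤ b

/-- Two sets are in conflict if their spans intersect. -/
def Conflict (X Y : Finset V) : Prop := (conv X ∩ conv Y).Nonempty

/-- The union of a part `X` and of all parts adjacent to `X` in the red graph. -/
def redClosedNbhd (G : SimpleGraph V) (P : Finpartition (Finset.univ : Finset V))
    (X : Finset V) : Finset V :=
  X ∪ (P.parts.filter fun Y => Y ≠ X ∧ Inhomog G X Y).biUnion id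

/-- The stretch of a part `X` of `P`: the number of parts `Y ≠ X` that conflict with the
union of `X` and all parts adjacent to `X` in the red graph (i.e. that interfere with `X`). -/
def stretchPart (G : SimpleGraph V) (P : Finpartition (Finset.univ : Finset V))
    (X : Finset V) : ℕ :=
  ((P.parts.erase X).filter fun Y => Conflict Y (redClosedNbhd G P X)).card

/-- The stretch of a partition: the maximum stretch of a part. -/
def stretchPartition (G : SimpleGraph V) (P : Finpartition (Finset.univ : Finset V)) : ℕ :=
  P.parts.sup fun X => stretchPart G P X

/-- Stretch-width of the ordered graph `(G, ≤)`. -/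
def stwOrd (G : SimpleGraph V) : ℕ :=
  sInf { k | ∃ l, IsPartitionSeq l ∧ ∀ P ∈ l, stretchPartition G P ≤ k }

end Ord

/-- Stretch-width of `G`: minimum over all linear orders on the vertices. -/
def stw (G : SimpleGraph V) : ℕ :=
  sInf (Set.range fun L : LinearOrder V => @stwOrd V _ _ L G)


/-! ### Symmetric 0,1-matrices: stretch-width and divisions -/

variable {n : ℕ}

/-- The zone `R × C` of `M` is non-constant. -/
def NonConstZone (M : Fin n → Fin n → Bool) (R C : Finset (Fin n)) : Prop :=
  ∃ r ∈ R, ∃ r' ∈ R, ∃ c ∈ C, ∃ c' ∈ C, M r c ≠ M r' c'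

/-- `D_R`: the union of `R` and of all parts `C` of `P` with `R × C` non-constant. -/
def matBag (M : Fin n → Fin n → Bool) (P : Finpartition (Finset.univ : Finset (Fin n)))
    (R : Finset (Fin n)) : Finset (Fin n) :=
  R ∪ (P.parts.filter fun C => NonConstZone M R C).biUnion id

/-- The stretch value of a part `R` of `P`. -/
def matStretchPart (M : Fin n → Fin n → Bool) (P : Finpartition (Finset.univ : Finset (Fin n)))
    (R : Finset (Fin n)) : ℕ :=
  (P.parts.filter fun Q => Conflict Q (matBag M P R)).card

/-- The stretch value of a partition. -/
def matStretch (M : Fin n → Fin n → Bool)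
    (P : Finpartition (Finset.univ : Finset (Fin n))) : ℕ :=
  P.parts.sup fun R => matStretchPart M P R

/-- Stretch-width of a symmetric 0,1-matrix. -/
def stwM (M : Fin n → Fin n → Bool) : ℕ :=
  sInf { k | ∃ l : List (Finpartition (Finset.univ : Finset (Fin n))),
    IsPartitionSeq l ∧ ∀ P ∈ l, matStretch M P ≤ k }

/-- A symmetric division `(I_1, …, I_p)` of `[n]` into consecutive nonempty intervals;
out-of-range indices denote the empty set. -/
structure SymDiv (n : ℕ) where
  p : ℕ
  I : ℤ → Finset (Fin n)
  out_empty : ∀ j : ℤ, (j < 1 ∨ (p : ℤ) < j) → I j = ∅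
  in_nonempty : ∀ j : ℤ, 1 ≤ j → j ≤ (p : ℤ) → (I j).Nonempty
  interval : ∀ j : ℤ, ∀ a ∈ I j, ∀ c ∈ I j, ∀ b : Fin n, a ≤ b → b ≤ c → b ∈ I j
  increasing : ∀ j : ℤ, ∀ a ∈ I j, ∀ b ∈ I (j + 1), a < b
  covers : ∀ v : Fin n, ∃ j : ℤ, v ∈ I j

/-- The restriction of row `r` of `M` to the columns outside `U`. -/
def rowRestr (M : Fin n → Fin n → Bool) (U : Finset (Fin n)) (r : Fin n) :
    Fin n → Option Bool :=
  fun c => if c ∈ U then none else some (M r c)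

/-- The union `I_j ∪ I_{j+1} ∪ … ∪ I_{j+k-1}`. -/
def window (D : SymDiv n) (j : ℤ) (k : ℕ) : Finset (Fin n) :=
  (Finset.Icc j (j + (k : ℤ) - 1)).biUnion D.I

/-- The part `I_i` of `D` is `k`-wide. -/
def WidePart (M : Fin n → Fin n → Bool) (D : SymDiv n) (k : ℕ) (i : ℤ) : Prop :=
  ∀ j : ℤ, j ≤ i → i ≤ j + (k : ℤ) - 1 →
    k ≤ ((D.I i).image (rowRestr M (window D j k))).card

/-- The division `D` is `k`-wide. -/
def WideDiv (M : Fin n → Fin n → Bool) (D : SymDiv n) (k : ℕ) : Prop :=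
  ∀ i : ℤ, 1 ≤ i → i ≤ (D.p : ℤ) → WidePart M D k i

/-- The division `D` is `k`-diagonal. -/
def DiagDiv (M : Fin n → Fin n → Bool) (D : SymDiv n) (k : ℕ) : Prop :=
  ∀ i : ℤ, 1 ≤ i → i ≤ (D.p : ℤ) → ¬ WidePart M D k i

/-- `D` is obtained from `E` by merging two consecutive intervals. -/
def DivMerge (E D : SymDiv n) : Prop :=
  D.p + 1 = E.p ∧ ∃ m : ℤ, 1 ≤ m ∧ m < (E.p : ℤ) ∧
    (∀ j : ℤ, j < m → D.I j = E.I j) ∧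
    D.I m = E.I m ∪ E.I (m + 1) ∧
    (∀ j : ℤ, m < j → D.I j = E.I (j + 1))

/-- `l = [D_n, …, D_1]` is a sequence of symmetric divisions: from the division into
`n` singletons to the division with one part, merging two consecutive intervals at each step. -/
def IsDivSeq (l : List (SymDiv n)) : Prop :=
  (∃ D, l.head? = some D ∧ D.p = n) ∧
  (∃ D, l.getLast? = some D ∧ D.p = 1) ∧
  l.Chain' DivMerge


/-! ### Ordered graphs, crossing edges, overlap graphs -/

section Overlap
variable {α : Type} [LinearOrder α]

/-- The left (smaller) endpoint of an edge. -/
def eL (e : Sym2 α) : α := Sym2.lift ⟨fun a b => min a b, fun a b => min_comm a b⟩ e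

/-- The right (larger) endpoint of an edge. -/
def eR (e : Sym2 α) : α := Sym2.lift ⟨fun a b => max a b, fun a b => max_comm a b⟩ e

/-- Two edges cross: `L(e) ≺ L(f) ≺ R(e) ≺ R(f)` or `L(f) ≺ L(e) ≺ R(f) ≺ R(e)`. -/
def Cross (e f : Sym2 α) : Prop :=
  (eL e < eL f ∧ eL f < eR e ∧ eR e < eR f) ∨
  (eL f < eL e ∧ eL e < eR f ∧ eR f < eR e)

/-- The overlap graph of `(G, ≤)` has a `K_{t,t}` subgraph: two disjoint sets of `t` edges
of `G` each, such that every edge of one set crosses every edge of the other. -/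
def OvHasKtt (G : SimpleGraph α) (t : ℕ) : Prop :=
  ∃ A B : Finset (Sym2 α), ↑A ⊆ G.edgeSet ∧ ↑B ⊆ G.edgeSet ∧ Disjoint A B ∧
    A.card = t ∧ B.card = t ∧ ∀ e ∈ A, ∀ f ∈ B, Cross e f

variable [Fintype α]

/-- The interior of an edge: the vertices strictly between its endpoints. -/
def edgeInterior (e : Sym2 α) : Finset α :=
  Finset.univ.filter fun x => eL e < x ∧ x < eR e

/-- The length of an edge: the number of vertices `x` with `L(e) ≺ x ⪯ R(e)`. -/
def edgeLen (e : Sym2 α) : ℕ := (Finset.univ.filter fun x => eL e < x ∧ x ≤ eR e).card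

/-- The maximum length of an edge of `S` (0 if `S` is empty). -/
def lenSup (S : Finset (Sym2 α)) : ℕ := S.sup edgeLen

/-- A rainbow: a set of edges of `G` whose interiors are pairwise nested. -/
def IsRainbow (G : SimpleGraph α) (S : Finset (Sym2 α)) : Prop :=
  ↑S ⊆ G.edgeSet ∧
  ∀ e ∈ S, ∀ f ∈ S, edgeInterior e ⊆ edgeInterior f ∨ edgeInterior f ⊆ edgeInterior e

/-- A rainbow over the vertex `v`. -/
def IsRainbowOver (G : SimpleGraph α) (S : Finset (Sym2 α)) (v : α) : Prop :=
  IsRainbow G S ∧ ∀ e ∈ S, eL e < v ∧ v < eR e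

/-- A maximum rainbow over `v`. -/
def IsMaxRainbowOver (G : SimpleGraph α) (S : Finset (Sym2 α)) (v : α) : Prop :=
  IsRainbowOver G S v ∧ ∀ S' : Finset (Sym2 α), IsRainbowOver G S' v → S'.card ≤ S.card

end Overlap

/-! ### Balanced separators and tree-decompositions -/

section Sep
variable {V : Type} [Fintype V] [DecidableEq V]

/-- `C` is a `c`-balanced separator of `G`. -/
def IsBalancedSeparator (G : SimpleGraph V) (c : ℝ) (C : Finset V) : Prop :=
  ∃ A B : Finset V, Disjoint A B ∧ A ∪ B = Finset.univ \ C ∧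
    (∀ a ∈ A, ∀ b ∈ B, ¬ G.Adj a b) ∧
    (A.card : ℝ) ≤ (1 - c) * (Fintype.card V) ∧
    (B.card : ℝ) ≤ (1 - c) * (Fintype.card V)

/-- `(T, β)` is a tree-decomposition of `G`. -/
def IsTreeDecomp (G : SimpleGraph V) {m : ℕ} (T : SimpleGraph (Fin m))
    (β : Fin m → Finset V) : Prop :=
  T.Connected ∧ T.IsAcyclic ∧
  (∀ v : V, ∃ t, v ∈ β t) ∧
  (∀ u v : V, G.Adj u v → ∃ t, u ∈ β t ∧ v ∈ β t) ∧
  (∀ v : V, (T.induce {t | v ∈ β t}).Connected)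

/-- Treewidth: the minimum width of a tree-decomposition of `G`. -/
def treewidth (G : SimpleGraph V) : ℕ :=
  sInf { k | ∃ (m : ℕ) (T : SimpleGraph (Fin m)) (β : Fin m → Finset V),
    IsTreeDecomp G T β ∧ (Finset.univ.sup fun t => (β t).card) - 1 ≤ k }

end Sep


/-! ### Subdivisions -/

/-- The internal vertices of a walk (its support minus the two endpoints). -/
def walkInternal {W : Type} {H : SimpleGraph W} {a b : W} (p : H.Walk a b) : List W :=
  p.support.tail.dropLast

/-- `H` is obtained from `G` by subdividing every edge at least `s` times. -/
def IsSubdivisionGE {V W : Type} (G : SimpleGraph V) (H : SimpleGraph W) (s : ℕ) : Prop :=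
  ∃ (φ : V ↪ W) (p : ∀ u v : V, G.Adj u v → H.Walk (φ u) (φ v)),
    (∀ u v huv, (p u v huv).IsPath) ∧
    (∀ u v huv, s + 1 ≤ (p u v huv).length) ∧
    (∀ u v huv, p u v huv = (p v u huv.symm).reverse) ∧
    (∀ u v huv, ∀ x ∈ walkInternal (p u v huv), x ∉ Set.range φ) ∧
    (∀ u v huv, ∀ u' v' h', s(u, v) ≠ s(u', v') →
      ∀ x ∈ walkInternal (p u v huv), x ∉ walkInternal (p u' v' h')) ∧
    (∀ x : W, x ∈ Set.range φ ∨ ∃ u v huv, x ∈ walkInternal (p u v huv)) ∧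
    (∀ e ∈ H.edgeSet, ∃ u v huv, e ∈ (p u v huv).edges)

/-- Subdividing the edge `uv` of `G` once: the new vertex is `none : Option V`. -/
def subdivideOnce {V : Type} (G : SimpleGraph V) (u v : V) : SimpleGraph (Option V) where
  Adj x y :=
    match x, y with
    | some a, some b => G.Adj a b ∧ s(a, b) ≠ s(u, v)
    | some a, none => a = u ∨ a = v
    | none, some b => b = u ∨ b = v
    | none, none => False
  symm := by
    refine ⟨?_⟩
    rintro (_ | a) (_ | b) h
    · exact h
    · exact h
    · exact h
    · exact ⟨h.1.symm, by rw [Sym2.eq_swap]; exact h.2⟩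
  loopless := by
    refine ⟨?_⟩
    rintro (_ | a) h
    · exact h
    · exact G.loopless.irrefl a h.1

/-! ### Flattening (iterated subdivisions) -/

/-- The number of vertices strictly between `u` and `v`. -/
def interiorCount {V : Type} [Fintype V] [LinearOrder V] (u v : V) : ℕ :=
  (Finset.univ.filter fun x => u < x ∧ x < v).card

/-- The ordered graph `H` is obtained from `(G, ≤)` by flattening the edge `uv`, via the
order-embedding `φ` of old vertices and the new vertices `w 0, …, w h` interleaved with
the vertices between `u` and `v`. -/
def IsFlattenStepWith {V W : Type} [Fintype V] [LinearOrder V] [Fintype W] [LinearOrder W]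
    (G : SimpleGraph V) (u v : V) (H : SimpleGraph W) (φ : V → W) (w : ℕ → W) : Prop :=
  G.Adj u v ∧ u < v ∧ StrictMono φ ∧
  (∀ x : W, (∃ a : V, x = φ a) ∨ ∃ i ≤ interiorCount u v, x = w i) ∧
  (∀ a : V, ∀ i ≤ interiorCount u v, φ a ≠ w i) ∧
  (∀ i ≤ interiorCount u v,
    (Finset.univ.filter fun x => u ≤ x ∧ x ≤ v ∧ φ x < w i).card = i + 1) ∧
  (∀ a b : W, H.Adj a b ↔
    ((∃ x y : V, G.Adj x y ∧ s(x, y) ≠ s(u, v) ∧ s(a, b) = s(φ x, φ y)) ∨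
     s(a, b) = s(φ u, w 0) ∨
     (∃ i : ℕ, i + 1 ≤ interiorCount u v ∧ s(a, b) = s(w i, w (i + 1))) ∨
     s(a, b) = s(w (interiorCount u v), φ v)))

/-! ### The graphs `A_3^h` -/

/-- The graph `A_3^h` on vertex set `{0, …, 3^h − 1}`: distinct `u, v` are adjacent iff
`|⌊u/3^l⌋ − ⌊v/3^l⌋| = 3` for some `l < h`. -/
def Agraph (h : ℕ) : SimpleGraph (Fin (3 ^ h)) where
  Adj u v := u ≠ v ∧ ∃ l < h,
    ((u : ℕ) / 3 ^ l = (v : ℕ) / 3 ^ l + 3 ∨ (v : ℕ) / 3 ^ l = (u : ℕ) / 3 ^ l + 3)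
  symm := by
    refine ⟨?_⟩
    rintro u v ⟨hne, l, hl, hd⟩
    exact ⟨hne.symm, l, hl, hd.symm⟩
  loopless := ⟨fun u h => h.1 rfl⟩

/-!
The proof maintains a partition of `[n]` refining a division of `[n]` into consecutive bands, such
that every band meets at most `2k - 2` parts and has fewer than `k` row types outside the bands
within distance `4k`, and rows of one part agree outside that neighbourhood. By symmetry of `M`,
the bag `D_R` of a part `R` then stays within distance `4k` of `R`, so every stretch value is at
most `(8k + 1)(2k - 2)`. Starting from singletons, either some band meets `k` parts, two of which
have the same row type and can be merged; or there is a single band, and any two parts can be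
merged; or two consecutive bands together have fewer than `k` row types and are fused into one
band. Such a pair of bands exists: otherwise pairing consecutive bands gives a `k`-wide division.
-/

end StretchPaper

namespace Finpartition

variable {α : Type*} [DecidableEq α] {s : Finset α} (P : Finpartition s) {A B X : Finset α}

def mergeParts (hA : A ∈ P.parts) (hB : B ∈ P.parts) (hAB : A ≠ B) : Finpartition s where
  parts := insert (A ∪ B) ((P.parts.erase A).erase B)
  supIndep := by
    rw [Finset.supIndep_iff_pairwiseDisjoint, coe_insert]
    refine (P.disjoint.subset fun X hX => ?_).insert fun Y hY _ => ?_
    · exact mem_of_mem_erase (mem_of_mem_erase hX)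
    · obtain ⟨hYB, hYA, hY⟩ := mem_erase.1 hY |>.imp_right mem_erase.1
      exact disjoint_union_left.2 ⟨P.disjoint hA hY hYA.symm, P.disjoint hB hY hYB.symm⟩
  sup_parts := by
    conv_rhs => rw [← P.sup_parts, ← insert_erase hA, ← insert_erase (mem_erase.2 ⟨hAB.symm, hB⟩)]
    simp only [sup_insert, id, sup_eq_union, union_assoc]
  bot_notMem := by
    simp only [mem_insert, not_or]
    exact ⟨((P.nonempty_of_mem_parts hA).mono subset_union_left).ne_empty.symm,
      fun h => P.bot_notMem (mem_of_mem_erase (mem_of_mem_erase h))⟩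

lemma parts_eq_singleton_of_card_parts_le_one (hs : s.Nonempty) (h : #P.parts ≤ 1) :
    P.parts = {s} := by
  obtain ⟨K, hK⟩ := card_eq_one.1 (h.antisymm (card_pos.2 (parts_nonempty_iff.2 hs.ne_empty)))
  have := P.sup_parts
  rw [hK, sup_singleton, id] at this
  rw [hK, this]

variable {P}

lemma mem_mergeParts {hA : A ∈ P.parts} {hB : B ∈ P.parts} {hAB : A ≠ B} :
    X ∈ (P.mergeParts hA hB hAB).parts ↔ X = A ∪ B ∨ X ∈ P.parts ∧ X ≠ A ∧ X ≠ B := by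
  simp only [mergeParts, mem_insert, mem_erase]
  tauto

lemma card_filter_mergeParts_le (hA : A ∈ P.parts) (hB : B ∈ P.parts) (hAB : A ≠ B)
    (q : Finset α → Prop) [DecidablePred q] (hq : q (A ∪ B) → q A) :
    #((P.mergeParts hA hB hAB).parts.filter q) ≤ #(P.parts.filter q) := by
  refine card_le_card_of_injOn (fun X => if X = A ∪ B then A else X) (fun X hX => ?_) ?_
  · obtain ⟨hX, hqX⟩ := mem_filter.1 hX
    rw [mem_coe, mem_filter]
    dsimp only
    split_ifs with hXU
    · exact ⟨hA, hq (hXU ▸ hqX)⟩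
    · obtain rfl | ⟨hX, -⟩ := mem_mergeParts.1 hX
      · exact absurd rfl hXU
      · exact ⟨hX, hqX⟩
  · intro X hX Y hY hXY
    have hX := mem_mergeParts.1 (mem_filter.1 hX).1
    have hY := mem_mergeParts.1 (mem_filter.1 hY).1
    dsimp only at hXY
    split_ifs at hXY with hXU hYU hYU <;> grind

end Finpartition

namespace StretchPaper

section MergeSequences

variable {V : Type} [Fintype V] [DecidableEq V]

lemma MergeStep.card_parts_add_one {Q P : Finpartition (univ : Finset V)} (h : MergeStep Q P) :
    #P.parts + 1 = #Q.parts := by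
  obtain ⟨A, hA, B, hB, hAB, hP⟩ := h
  have hU : A ∪ B ∉ (Q.parts.erase A).erase B := by
    intro hU
    obtain ⟨a, ha⟩ := Q.nonempty_of_mem_parts hA
    obtain ⟨b, hb⟩ := Q.nonempty_of_mem_parts hB
    have hUA := Q.eq_of_mem_parts (mem_of_mem_erase (mem_of_mem_erase hU)) hA
      (mem_union_left _ ha) ha
    exact hAB (Q.eq_of_mem_parts hA hB (hUA ▸ mem_union_right _ hb) hb)
  have h2 : 1 < #Q.parts := one_lt_card.2 ⟨A, hA, B, hB, hAB⟩
  rw [hP, card_insert_of_notMem hU, card_erase_of_mem (mem_erase.2 ⟨hAB.symm, hB⟩),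
    card_erase_of_mem hA]
  omega

def MergesWithin (f : Finpartition (univ : Finset V) → ℕ) (b : ℕ)
    (P : Finpartition (univ : Finset V)) : Prop :=
  ∃ l : List (Finpartition (univ : Finset V)), l.head? = some P ∧
    (∃ Q, l.getLast? = some Q ∧ Q.parts = {univ}) ∧ l.IsChain MergeStep ∧ ∀ Q ∈ l, f Q ≤ b

variable {f : Finpartition (univ : Finset V) → ℕ} {b : ℕ} {P Q : Finpartition (univ : Finset V)}

lemma MergesWithin.of_parts_eq_singleton (hP : P.parts = {univ}) (hb : f P ≤ b) :
    MergesWithin f b P :=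
  ⟨[P], rfl, ⟨P, rfl, hP⟩, List.isChain_singleton _, by simpa⟩

lemma MergesWithin.cons (hQ : MergesWithin f b Q) (hPQ : MergeStep P Q) (hb : f P ≤ b) :
    MergesWithin f b P := by
  obtain ⟨l, hhead, ⟨R, hlast, hR⟩, hchain, hl⟩ := hQ
  refine ⟨P :: l, rfl, ⟨R, ?_, hR⟩, hchain.cons ?_, ?_⟩
  · cases l <;> simp_all
  · simpa [hhead] using hPQ
  · simpa [hb] using hl

end MergeSequences

lemma stwM_le_of_mergesWithin {n b : ℕ} {M : Fin n → Fin n → Bool}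
    (h : MergesWithin (matStretch M) b ⊥) : stwM M ≤ b := by
  obtain ⟨l, hhead, hlast, hchain, hl⟩ := h
  refine Nat.sInf_le ⟨l, ⟨⟨⊥, hhead, fun X hX => ?_⟩, hlast, hchain⟩, hl⟩
  obtain ⟨a, -, rfl⟩ := Finpartition.mem_bot_iff.1 hX
  exact card_singleton a

section Slabs

variable {V : Type} [Fintype V]

def slab (f : V → ℤ) (a b : ℤ) : Finset V :=
  univ.filter fun v => a ≤ f v ∧ f v ≤ b

@[simp]
lemma mem_slab {f : V → ℤ} {a b : ℤ} {v : V} : v ∈ slab f a b ↔ a ≤ f v ∧ f v ≤ b := by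
  simp [slab]

lemma conv_subset_slab [DecidableEq V] [LinearOrder V] {f : V → ℤ} (hf : Monotone f)
    {a b : ℤ} {X : Finset V} (hX : X ⊆ slab f a b) : conv X ⊆ slab f a b := by
  intro v hv
  obtain ⟨-, ⟨x, hx, hxv⟩, y, hy, hvy⟩ := mem_filter.1 hv
  have := mem_slab.1 (hX hx)
  have := mem_slab.1 (hX hy)
  have := hf hxv
  have := hf hvy
  exact mem_slab.2 ⟨by omega, by omega⟩

def fuseBand (f : V → ℤ) (m : ℤ) (v : V) : ℤ :=
  if f v ≤ m then f v else f v - 1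

-- Stated with `K.image f` because the instance deciding `∃ v ∈ K, f v = j` found for `Fin n`
-- differs from the one found for a general `V`.
def partsInBand [DecidableEq V] (P : Finpartition (univ : Finset V)) (f : V → ℤ) (j : ℤ) :
    Finset (Finset V) :=
  P.parts.filter fun K => j ∈ K.image f

lemma mem_partsInBand [DecidableEq V] {P : Finpartition (univ : Finset V)} {f : V → ℤ} {j : ℤ}
    {K : Finset V} : K ∈ partsInBand P f j ↔ K ∈ P.parts ∧ ∃ v ∈ K, f v = j := by
  simp [partsInBand]

end Slabs

section Divisions

variable {n k : ℕ}

lemma card_image_rowRestr_le_of_subset (M : Fin n → Fin n → Bool) (S : Finset (Fin n))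
    {U U' : Finset (Fin n)} (hU : U ⊆ U') :
    #(S.image (rowRestr M U')) ≤ #(S.image (rowRestr M U)) := by
  have : S.image (rowRestr M U') =
      (S.image (rowRestr M U)).image fun g c => if c ∈ U' then none else g c := by
    rw [image_image]
    refine image_congr fun r _ => funext fun c => ?_
    by_cases hc : c ∈ U'
    · simp [rowRestr, hc]
    · simp [rowRestr, hc, mt (@hU c) hc]
  rw [this]
  exact card_image_le

def SymDiv.ofMonotone (f : Fin n → ℤ) (q : ℕ) (hf : Monotone f)
    (hrange : ∀ v, 1 ≤ f v ∧ f v ≤ q) (hsurj : ∀ j : ℤ, 1 ≤ j → j ≤ q → ∃ v, f v = j) :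
    SymDiv n where
  p := q
  I j := univ.filter fun v => f v = j
  out_empty j hj := filter_eq_empty_iff.2 fun v _ => by have := hrange v; omega
  in_nonempty j hj₁ hj₂ := by
    obtain ⟨v, hv⟩ := hsurj j hj₁ hj₂
    exact ⟨v, mem_filter.2 ⟨mem_univ v, hv⟩⟩
  interval j a ha c hc b hab hbc := by
    simp only [mem_filter, mem_univ, true_and] at ha hc ⊢
    have := hf hab
    have := hf hbc
    omega
  increasing j a ha b hb := by
    simp only [mem_filter, mem_univ, true_and] at ha hb
    exact lt_of_not_ge fun hba => by have := hf hba; omega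
  covers v := ⟨f v, mem_filter.2 ⟨mem_univ v, rfl⟩⟩

lemma SymDiv.mem_window_ofMonotone {f : Fin n → ℤ} {q : ℕ} {hf hrange hsurj} {j : ℤ}
    {v : Fin n} :
    v ∈ window (SymDiv.ofMonotone f q hf hrange hsurj) j k ↔ j ≤ f v ∧ f v ≤ j + k - 1 := by
  simp [window, SymDiv.ofMonotone]

def SymDiv.singletons (n : ℕ) : SymDiv n :=
  SymDiv.ofMonotone (fun v => (v : ℤ) + 1) n (fun a b hab => by simpa using hab)
    (fun v => by have := v.isLt; omega)
    (fun j hj₁ hj₂ => ⟨⟨(j - 1).toNat, by omega⟩, by simp; omega⟩)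

lemma wideDiv_of_le_one (M : Fin n → Fin n → Bool) (D : SymDiv n) (hk : k ≤ 1) :
    WideDiv M D k := fun i hi₁ hi₂ _ _ _ =>
  hk.trans (card_pos.2 ((D.in_nonempty i hi₁ hi₂).image _))

end Divisions

structure BandedPartition (n k : ℕ) (M : Fin n → Fin n → Bool) where
  band : Fin n → ℤ
  p : ℕ
  P : Finpartition (univ : Finset (Fin n))
  band_mono : Monotone band
  one_le_band : ∀ v, 1 ≤ band v
  band_le : ∀ v, band v ≤ p
  band_surj : ∀ j : ℤ, 1 ≤ j → j ≤ p → ∃ v, band v = j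
  band_eq_of_mem : ∀ K ∈ P.parts, ∀ a ∈ K, ∀ b ∈ K, band a = band b
  card_partsInBand_le : ∀ j, #(partsInBand P band j) ≤ 2 * k - 2
  row_eq_of_notMem : ∀ K ∈ P.parts, ∀ r ∈ K, ∀ r' ∈ K,
    ∀ c ∉ slab band (band r - 4 * k) (band r + 4 * k), M r c = M r' c
  card_rowTypes_le : ∀ j,
    #((slab band j j).image (rowRestr M (slab band (j - 4 * k) (j + 4 * k)))) ≤ k - 1

namespace BandedPartition

variable {n k : ℕ} {M : Fin n → Fin n → Bool}

def singletons (hk : 2 ≤ k) : BandedPartition n k M where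
  band v := (v : ℤ) + 1
  p := n
  P := ⊥
  band_mono a b hab := by simpa using hab
  one_le_band v := by omega
  band_le v := by have := v.isLt; omega
  band_surj j hj₁ hj₂ := ⟨⟨(j - 1).toNat, by omega⟩, by simp; omega⟩
  band_eq_of_mem K hK a ha b hb := by
    obtain ⟨x, -, rfl⟩ := Finpartition.mem_bot_iff.1 hK
    rw [mem_singleton.1 ha, mem_singleton.1 hb]
  card_partsInBand_le j := by
    refine (card_le_one.2 fun K hK K' hK' => ?_).trans (by omega)
    obtain ⟨hKP, a, ha, rfl⟩ := mem_partsInBand.1 hK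
    obtain ⟨hKP', b, hb, hab⟩ := mem_partsInBand.1 hK'
    obtain ⟨x, -, rfl⟩ := Finpartition.mem_bot_iff.1 hKP
    obtain ⟨y, -, rfl⟩ := Finpartition.mem_bot_iff.1 hKP'
    rw [mem_singleton] at ha hb
    subst ha hb
    rw [Fin.ext (by omega : (b : ℕ) = a)]
  row_eq_of_notMem K hK r hr r' hr' c _ := by
    obtain ⟨x, -, rfl⟩ := Finpartition.mem_bot_iff.1 hK
    rw [mem_singleton.1 hr, mem_singleton.1 hr']
  card_rowTypes_le j := by
    refine card_image_le.trans ((card_le_one.2 fun a ha b hb => ?_).trans (by omega))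
    simp only [mem_slab] at ha hb
    exact Fin.ext (by omega)

variable (C : BandedPartition n k M)

lemma subset_slab_band {K : Finset (Fin n)} (hK : K ∈ C.P.parts) {r : Fin n} (hr : r ∈ K) :
    K ⊆ slab C.band (C.band r) (C.band r) := fun v hv =>
  mem_slab.2 ⟨(C.band_eq_of_mem K hK r hr v hv).le, (C.band_eq_of_mem K hK v hv r hr).le⟩

/-- By symmetry of `M`, a zone between two parts more than `4k` bands apart is constant. -/
lemma matBag_subset_slab (hM : ∀ i j, M i j = M j i) {R : Finset (Fin n)} (hR : R ∈ C.P.parts)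
    {r : Fin n} (hr : r ∈ R) :
    matBag M C.P R ⊆ slab C.band (C.band r - 4 * k) (C.band r + 4 * k) := by
  intro x hx
  obtain hxR | hxQ := mem_union.1 hx
  · have := C.band_eq_of_mem R hR x hxR r hr
    exact mem_slab.2 ⟨by omega, by omega⟩
  obtain ⟨Q, hQ, hxQ⟩ := mem_biUnion.1 hxQ
  obtain ⟨hQ, r₁, hr₁, r₂, hr₂, c₁, hc₁, c₂, hc₂, hne⟩ := mem_filter.1 hQ
  by_contra hfar
  have far : ∀ a ∈ R, ∀ c ∈ Q, a ∉ slab C.band (C.band c - 4 * k) (C.band c + 4 * k) ∧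
      c ∉ slab C.band (C.band a - 4 * k) (C.band a + 4 * k) := by
    intro a ha c hc
    have := C.band_eq_of_mem R hR a ha r hr
    have := C.band_eq_of_mem Q hQ c hc x hxQ
    simp only [mem_slab] at hfar ⊢
    omega
  refine hne ?_
  calc M r₁ c₁ = M r₂ c₁ := C.row_eq_of_notMem R hR r₁ hr₁ r₂ hr₂ c₁ (far r₁ hr₁ c₁ hc₁).2
    _ = M c₁ r₂ := hM _ _
    _ = M c₂ r₂ := C.row_eq_of_notMem Q hQ c₁ hc₁ c₂ hc₂ r₂ (far r₂ hr₂ c₁ hc₁).1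
    _ = M r₂ c₂ := hM _ _

lemma matStretch_le (hM : ∀ i j, M i j = M j i) :
    matStretch M C.P ≤ (8 * k + 1) * (2 * k - 2) := by
  refine Finset.sup_le fun R hR => ?_
  obtain ⟨r, hr⟩ := C.P.nonempty_of_mem_parts hR
  have hbag := conv_subset_slab C.band_mono (C.matBag_subset_slab hM hR hr)
  calc #(C.P.parts.filter fun Q => Conflict Q (matBag M C.P R))
      ≤ #((Icc (C.band r - 4 * k) (C.band r + 4 * k)).biUnion (partsInBand C.P C.band)) := by
        refine card_le_card fun Q hQ => ?_
        obtain ⟨hQ, x, hx⟩ := mem_filter.1 hQ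
        obtain ⟨q, hq⟩ := C.P.nonempty_of_mem_parts hQ
        have hxQ := mem_slab.1 (conv_subset_slab C.band_mono (C.subset_slab_band hQ hq)
          (mem_inter.1 hx).1)
        have hxR := mem_slab.1 (hbag (mem_inter.1 hx).2)
        exact mem_biUnion.2 ⟨C.band q, mem_Icc.2 ⟨by omega, by omega⟩,
          mem_partsInBand.2 ⟨hQ, q, hq, rfl⟩⟩
    _ ≤ ∑ j ∈ Icc (C.band r - 4 * k) (C.band r + 4 * k), #(partsInBand C.P C.band j) :=
        card_biUnion_le
    _ ≤ #(Icc (C.band r - 4 * k) (C.band r + 4 * k)) • (2 * k - 2) :=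
        sum_le_card_nsmul _ _ _ fun j _ => C.card_partsInBand_le j
    _ = (8 * k + 1) * (2 * k - 2) := by
        rw [Int.card_Icc, smul_eq_mul]
        congr 1
        omega

lemma exists_mergeStep {K₁ K₂ : Finset (Fin n)} (hK₁ : K₁ ∈ C.P.parts) (hK₂ : K₂ ∈ C.P.parts)
    (hne : K₁ ≠ K₂) {r₁ r₂ : Fin n} (hr₁ : r₁ ∈ K₁) (hr₂ : r₂ ∈ K₂)
    (hband : C.band r₁ = C.band r₂)
    (hrow : rowRestr M (slab C.band (C.band r₁ - 4 * k) (C.band r₁ + 4 * k)) r₁ =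
      rowRestr M (slab C.band (C.band r₁ - 4 * k) (C.band r₁ + 4 * k)) r₂) :
    ∃ C' : BandedPartition n k M, MergeStep C.P C'.P ∧ C'.p = C.p := by
  have hbandU : ∀ v ∈ K₁ ∪ K₂, C.band v = C.band r₁ := by
    intro v hv
    obtain hv | hv := mem_union.1 hv
    · exact C.band_eq_of_mem K₁ hK₁ v hv r₁ hr₁
    · exact (C.band_eq_of_mem K₂ hK₂ v hv r₂ hr₂).trans hband.symm
  have hrowU : ∀ v ∈ K₁ ∪ K₂,
      ∀ c ∉ slab C.band (C.band r₁ - 4 * k) (C.band r₁ + 4 * k), M v c = M r₁ c := by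
    intro v hv c hc
    obtain hv₁ | hv₂ := mem_union.1 hv
    · exact C.row_eq_of_notMem K₁ hK₁ v hv₁ r₁ hr₁ c (hbandU v hv ▸ hc)
    · have h₁₂ : M r₁ c = M r₂ c := by simpa [rowRestr, hc] using congrFun hrow c
      exact h₁₂ ▸ C.row_eq_of_notMem K₂ hK₂ v hv₂ r₂ hr₂ c (hbandU v hv ▸ hc)
  refine ⟨{ C with
    P := C.P.mergeParts hK₁ hK₂ hne
    band_eq_of_mem := fun K hK a ha b hb => ?_
    card_partsInBand_le := fun j => ?_
    row_eq_of_notMem := fun K hK r hr r' hr' c hc => ?_ }, ⟨K₁, hK₁, K₂, hK₂, hne, rfl⟩, rfl⟩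
  · obtain rfl | ⟨hK, -⟩ := Finpartition.mem_mergeParts.1 hK
    · rw [hbandU a ha, hbandU b hb]
    · exact C.band_eq_of_mem K hK a ha b hb
  · refine (Finpartition.card_filter_mergeParts_le hK₁ hK₂ hne _ fun hj => ?_).trans
      (C.card_partsInBand_le j)
    obtain ⟨v, hv, rfl⟩ := mem_image.1 hj
    obtain ⟨a, ha⟩ := C.P.nonempty_of_mem_parts hK₁
    exact mem_image.2 ⟨a, ha, by rw [hbandU a (mem_union_left _ ha), hbandU v hv]⟩
  · obtain rfl | ⟨hK, -⟩ := Finpartition.mem_mergeParts.1 hK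
    · rw [hbandU r hr] at hc
      rw [hrowU r hr c hc, hrowU r' hr' c hc]
    · exact C.row_eq_of_notMem K hK r hr r' hr' c hc

lemma exists_mergeStep_of_lt_card_partsInBand {j : ℤ} (hj : k - 1 < #(partsInBand C.P C.band j)) :
    ∃ C' : BandedPartition n k M, MergeStep C.P C'.P ∧ C'.p = C.p := by
  have hrep : ∀ K ∈ partsInBand C.P C.band j, ∃ r ∈ K, C.band r = j :=
    fun K hK => (mem_partsInBand.1 hK).2
  obtain ⟨K₀, hK₀⟩ := card_pos.1 (Nat.zero_lt_of_lt hj)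
  have : Nonempty (Fin n) := ⟨(hrep K₀ hK₀).choose⟩
  choose! rep hrep_mem hrep_band using hrep
  obtain ⟨K₁, hK₁, K₂, hK₂, hne, hrow⟩ := exists_ne_map_eq_of_card_lt_of_maps_to
    ((C.card_rowTypes_le j).trans_lt hj)
    (f := fun K => rowRestr M (slab C.band (j - 4 * k) (j + 4 * k)) (rep K))
    fun K hK => mem_image_of_mem _ (mem_slab.2 ⟨(hrep_band K hK).ge, (hrep_band K hK).le⟩)
  refine C.exists_mergeStep (mem_partsInBand.1 hK₁).1 (mem_partsInBand.1 hK₂).1 hne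
    (hrep_mem K₁ hK₁) (hrep_mem K₂ hK₂) ((hrep_band K₁ hK₁).trans (hrep_band K₂ hK₂).symm) ?_
  rwa [hrep_band K₁ hK₁]

lemma exists_mergeStep_of_p_le_one (hp : C.p ≤ 1) (hP : 1 < #C.P.parts) :
    ∃ C' : BandedPartition n k M, MergeStep C.P C'.P ∧ C'.p = C.p := by
  obtain ⟨K₁, hK₁, K₂, hK₂, hne⟩ := one_lt_card.1 hP
  obtain ⟨r₁, hr₁⟩ := C.P.nonempty_of_mem_parts hK₁
  obtain ⟨r₂, hr₂⟩ := C.P.nonempty_of_mem_parts hK₂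
  have hband : ∀ v, C.band v = 1 := fun v => by have := C.one_le_band v; have := C.band_le v; omega
  refine C.exists_mergeStep hK₁ hK₂ hne hr₁ hr₂ (by rw [hband, hband]) (funext fun c => ?_)
  have hc : c ∈ slab C.band (C.band r₁ - 4 * k) (C.band r₁ + 4 * k) := by
    simp only [mem_slab, hband]
    omega
  simp [rowRestr, hc]

def Fusible (m : ℤ) : Prop :=
  #((slab C.band m (m + 1)).image (rowRestr M (slab C.band (m - 4 * k) (m + 4 * k + 1)))) ≤ k - 1

/-- Part `i` consists of the bands `2i - 1` and `2i`, and the last part also of band `p` when `p`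
is odd. -/
def pairing (hp : 2 ≤ C.p) : SymDiv n :=
  SymDiv.ofMonotone (fun c => min ((C.band c + 1) / 2) ((C.p / 2 : ℕ) : ℤ)) (C.p / 2)
    (fun a b hab => by have := C.band_mono hab; dsimp only; omega)
    (fun v => by have := C.one_le_band v; omega)
    (fun j hj₁ hj₂ => by
      obtain ⟨v, hv⟩ := C.band_surj (2 * j - 1) (by omega) (by omega)
      exact ⟨v, by omega⟩)

lemma wideDiv_pairing (hp : 2 ≤ C.p) (hno : ∀ m : ℤ, 1 ≤ m → m < C.p → ¬ C.Fusible m) :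
    WideDiv M (C.pairing hp) k := by
  intro i hi₁ hi₂ j hji hij
  change i ≤ ((C.p / 2 : ℕ) : ℤ) at hi₂
  have hpairs : slab C.band (2 * i - 1) (2 * i) ⊆ (C.pairing hp).I i := fun c hc => by
    have := mem_slab.1 hc
    simp only [pairing, SymDiv.ofMonotone, mem_filter, mem_univ, true_and]
    omega
  have hwindow : window (C.pairing hp) j k ⊆
      slab C.band (2 * i - 1 - 4 * k) (2 * i - 1 + 4 * k + 1) := fun c hc => by
    have := SymDiv.mem_window_ofMonotone.1 hc
    have := C.band_le c
    exact mem_slab.2 ⟨by omega, by omega⟩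
  have := hno (2 * i - 1) (by omega) (by omega)
  rw [Fusible, not_le, sub_add_cancel] at this
  calc k ≤ #((slab C.band (2 * i - 1) (2 * i)).image
        (rowRestr M (slab C.band (2 * i - 1 - 4 * k) (2 * i - 1 + 4 * k + 1)))) := by omega
    _ ≤ #((slab C.band (2 * i - 1) (2 * i)).image (rowRestr M (window (C.pairing hp) j k))) :=
        card_image_rowRestr_le_of_subset M _ hwindow
    _ ≤ #(((C.pairing hp).I i).image (rowRestr M (window (C.pairing hp) j k))) :=
        card_le_card (image_subset_image hpairs)

lemma exists_fusible (h : ¬ ∃ D : SymDiv n, WideDiv M D k) (hp : 2 ≤ C.p) :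
    ∃ m : ℤ, 1 ≤ m ∧ m < C.p ∧ C.Fusible m := by
  by_contra! hno
  exact h ⟨C.pairing hp, C.wideDiv_pairing hp hno⟩

lemma card_partsInBand_fuseBand_le (hsmall : ∀ j, #(partsInBand C.P C.band j) ≤ k - 1) (m j : ℤ) :
    #(partsInBand C.P (fuseBand C.band m) j) ≤ 2 * k - 2 := by
  have hsub : partsInBand C.P (fuseBand C.band m) j ⊆
      partsInBand C.P C.band j ∪ partsInBand C.P C.band (j + 1) := fun K hK => by
    obtain ⟨hK, v, hv, hvj⟩ := mem_partsInBand.1 hK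
    simp only [mem_union, mem_partsInBand, fuseBand] at hvj ⊢
    split_ifs at hvj
    exacts [Or.inl ⟨hK, v, hv, hvj⟩, Or.inr ⟨hK, v, hv, by omega⟩]
  have := (card_le_card hsub).trans (card_union_le _ _)
  have := hsmall j
  have := hsmall (j + 1)
  omega

lemma card_rowTypes_fuseBand_le {m : ℤ} (hfus : C.Fusible m) (j : ℤ) :
    #((slab (fuseBand C.band m) j j).image
      (rowRestr M (slab (fuseBand C.band m) (j - 4 * k) (j + 4 * k)))) ≤ k - 1 := by
  by_cases hjm : j = m
  · subst hjm
    have hband : slab (fuseBand C.band j) j j = slab C.band j (j + 1) := by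
      ext c; simp only [mem_slab, fuseBand]; split_ifs <;> omega
    have hvicinity : slab (fuseBand C.band j) (j - 4 * k) (j + 4 * k) =
        slab C.band (j - 4 * k) (j + 4 * k + 1) := by
      ext c; simp only [mem_slab, fuseBand]; split_ifs <;> omega
    rw [hband, hvicinity]
    exact hfus
  · set j' := if j < m then j else j + 1
    have hband : slab (fuseBand C.band m) j j = slab C.band j' j' := by
      ext c; simp only [mem_slab, fuseBand, j']; split_ifs <;> omega
    have hvicinity : slab C.band (j' - 4 * k) (j' + 4 * k) ⊆
        slab (fuseBand C.band m) (j - 4 * k) (j + 4 * k) :=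
      fun c hc => by simp only [mem_slab, fuseBand, j'] at hc ⊢; split_ifs at hc ⊢ <;> omega
    rw [hband]
    exact (card_image_rowRestr_le_of_subset M _ hvicinity).trans (C.card_rowTypes_le j')

lemma exists_fuse (hsmall : ∀ j, #(partsInBand C.P C.band j) ≤ k - 1) {m : ℤ} (hm₁ : 1 ≤ m)
    (hm₂ : m < C.p) (hfus : C.Fusible m) :
    ∃ C' : BandedPartition n k M, C'.P = C.P ∧ C'.p < C.p := by
  refine ⟨{
    band := fuseBand C.band m
    p := C.p - 1
    P := C.P
    band_mono a b hab := by
      have := C.band_mono hab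
      simp only [fuseBand]
      split_ifs <;> omega
    one_le_band v := by have := C.one_le_band v; simp only [fuseBand]; split_ifs <;> omega
    band_le v := by have := C.band_le v; simp only [fuseBand]; split_ifs <;> omega
    band_surj j hj₁ hj₂ := by
      obtain ⟨v, hv⟩ := C.band_surj (if j ≤ m then j else j + 1) (by split_ifs <;> omega)
        (by split_ifs <;> omega)
      exact ⟨v, by simp only [fuseBand]; split_ifs at hv ⊢ <;> omega⟩
    band_eq_of_mem K hK a ha b hb := by simp only [fuseBand, C.band_eq_of_mem K hK a ha b hb]
    card_partsInBand_le := C.card_partsInBand_fuseBand_le hsmall m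
    row_eq_of_notMem K hK r hr r' hr' c hc := C.row_eq_of_notMem K hK r hr r' hr' c (by
      simp only [mem_slab, fuseBand] at hc ⊢
      split_ifs at hc <;> omega)
    card_rowTypes_le := C.card_rowTypes_fuseBand_le hfus }, rfl, by dsimp only; omega⟩

lemma exists_step (h : ¬ ∃ D : SymDiv n, WideDiv M D k) (hP : 1 < #C.P.parts) :
    (∃ C' : BandedPartition n k M, MergeStep C.P C'.P ∧ C'.p = C.p) ∨
      ∃ C' : BandedPartition n k M, C'.P = C.P ∧ C'.p < C.p := by
  by_cases hbig : ∃ j, k - 1 < #(partsInBand C.P C.band j)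
  · obtain ⟨j, hj⟩ := hbig
    exact Or.inl (C.exists_mergeStep_of_lt_card_partsInBand hj)
  by_cases hp : C.p ≤ 1
  · exact Or.inl (C.exists_mergeStep_of_p_le_one hp hP)
  push Not at hbig hp
  obtain ⟨m, hm₁, hm₂, hfus⟩ := C.exists_fusible h hp
  exact Or.inr (C.exists_fuse hbig hm₁ hm₂ hfus)

theorem mergesWithin (hM : ∀ i j, M i j = M j i) (h : ¬ ∃ D : SymDiv n, WideDiv M D k)
    (hn : 0 < n) : MergesWithin (matStretch M) ((8 * k + 1) * (2 * k - 2)) C.P := by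
  induction hN : #C.P.parts + C.p using Nat.strong_induction_on generalizing C with
  | _ N ih =>
  obtain hP | hP := le_or_gt #C.P.parts 1
  · exact .of_parts_eq_singleton
      (C.P.parts_eq_singleton_of_card_parts_le_one ⟨⟨0, hn⟩, mem_univ _⟩ hP) (C.matStretch_le hM)
  obtain ⟨C', hstep, hp⟩ | ⟨C', hP', hp⟩ := C.exists_step h hP
  · have := hstep.card_parts_add_one
    exact (ih _ (by omega) C' rfl).cons hstep (C.matStretch_le hM)
  · exact hP' ▸ ih _ (by rw [← hN, ← hP']; omega) C' rfl

end BandedPartition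

theorem stw_le_of_no_wide_division_general (n k : ℕ)
    (M : Fin n → Fin n → Bool) (hM : ∀ i j, M i j = M j i)
    (h : ¬ ∃ D : SymDiv n, WideDiv M D k) :
    stwM M ≤ 32 * (k + 1) ^ 3 := by
  have hn : 0 < n := by
    refine Nat.pos_of_ne_zero fun hn => h ⟨SymDiv.singletons n, fun i hi₁ hi₂ => ?_⟩
    change i ≤ (n : ℤ) at hi₂
    omega
  have hk : 2 ≤ k := by
    by_contra! hk
    exact h ⟨SymDiv.singletons n, wideDiv_of_le_one M _ (by omega)⟩
  calc stwM M ≤ (8 * k + 1) * (2 * k - 2) :=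
        stwM_le_of_mergesWithin ((BandedPartition.singletons hk).mergesWithin hM h hn)
    _ ≤ (8 * k + 1) * (2 * k) := by gcongr; omega
    _ ≤ 32 * (k + 1) ^ 3 := by ring_nf; nlinarith [Nat.zero_le (k ^ 3)]

/-- If the symmetric 0,1-matrix `M` has no `k`-wide symmetric division, then
`stw(M) ≤ 32(k+1)³`. -/
theorem stw_le_of_no_wide_division (n k : ℕ) (hk : 1 ≤ k)
    (M : Fin n → Fin n → Bool) (hM : ∀ i j, M i j = M j i)
    (h : ¬ ∃ D : SymDiv n, WideDiv M D k) :
    stwM M ≤ 32 * (k + 1) ^ 3 :=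
  stw_le_of_no_wide_division_general n k M hM h
end StretchPaper
end
end

section
/- Let (G,≺) be an ordered graph of maximum degree at most d, and let (G',≺') be an iterated subdivision of (G,≺), obtained by flattening all edges of G one after the other in some order. Then the overlap graph Ov(G',≺') has no K_{2d+2,2d+2} subgraph. -/
open Finset

noncomputable section
open scoped Classical
set_option linter.unusedSectionVars false
set_option linter.unusedVariables false

namespace StretchPaper

/-! ### Partitions, red graphs, component twin-width and stretch-width of graphs -/

variable {V : Type} [Fintype V] [DecidableEq V]

/-! ### Symmetric 0,1-matrices: stretch-width and divisions -/

variable {n : ℕ}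

/-!
Every edge of the final graph stems from the flattening of some edge of `G`, and its ancestors
survive in all later graphs. Let `e` be an edge of the `K_{t,t}` whose ancestor was created last,
when `uv` was flattened into the path `u, w_0, …, w_h, v`. Every edge `f` on the other side
crosses `e`; pulled back to the moment `e` was created it still crosses it, so it has an endpoint
strictly inside the ancestor of `e`. There is no vertex inside `u w_0` or `w_h v`, and a single,
old, vertex `z` inside `w_i w_{i+1}`. As `f` is not younger than `e` and no edge stemming from
`uv` ends at `z`, the ancestor of `f` is an edge at `z`. Flattening keeps all degrees at most
`max(d, 2)`, so at most `max(d, 2) < 2d + 2` edges `f` exist.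
-/

theorem eL_mk {α : Type} [LinearOrder α] (x y : α) : eL s(x, y) = min x y := rfl

theorem eR_mk {α : Type} [LinearOrder α] (x y : α) : eR s(x, y) = max x y := rfl

section Crossing

variable {α β : Type} [LinearOrder α] [LinearOrder β]

theorem eL_mem (e : Sym2 α) : eL e ∈ e := by
  induction e using Sym2.ind with
  | _ x y => rw [eL_mk, Sym2.mem_iff]; exact min_choice x y

theorem eR_mem (e : Sym2 α) : eR e ∈ e := by
  induction e using Sym2.ind with
  | _ x y => rw [eR_mk, Sym2.mem_iff]; exact max_choice x y

theorem eL_map {g : α → β} (hg : Monotone g) (e : Sym2 α) : eL (e.map g) = g (eL e) := by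
  induction e using Sym2.ind with
  | _ x y => exact (hg.map_min).symm

theorem eR_map {g : α → β} (hg : Monotone g) (e : Sym2 α) : eR (e.map g) = g (eR e) := by
  induction e using Sym2.ind with
  | _ x y => exact (hg.map_max).symm

theorem Cross.symm {e f : Sym2 α} (h : Cross e f) : Cross f e := Or.symm h

theorem cross_map_iff {g : α → β} (hg : StrictMono g) {e f : Sym2 α} :
    Cross (e.map g) (f.map g) ↔ Cross e f := by
  simp only [Cross, eL_map hg.monotone, eR_map hg.monotone, hg.lt_iff_lt]

theorem Cross.exists_mem_between {e f : Sym2 α} (h : Cross e f) :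
    ∃ x ∈ f, eL e < x ∧ x < eR e := by
  rcases h with ⟨h₁, h₂, -⟩ | ⟨-, h₂, h₃⟩
  · exact ⟨eL f, eL_mem f, h₁, h₂⟩
  · exact ⟨eR f, eR_mem f, h₂, h₃⟩

end Crossing

theorem card_adj_map_le_of_surjective {V W : Type} [Fintype V] [Fintype W] {G : SimpleGraph V}
    {H : SimpleGraph W} {ψ : V → W} (hψ : Function.Surjective ψ)
    (hadj : ∀ a b, H.Adj (ψ a) (ψ b) → G.Adj a b) (a : V) :
    (univ.filter fun y => H.Adj (ψ a) y).card ≤ (univ.filter fun b => G.Adj a b).card := by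
  refine (card_le_card fun y hy => ?_).trans (card_image_le (f := ψ))
  obtain ⟨b, rfl⟩ := hψ y
  simp only [mem_filter, mem_univ, true_and] at hy
  exact mem_image_of_mem ψ (by simpa using hadj a b hy)

theorem exists_max_of_forall_exists {α : Type} {P : α → ℕ → Prop} {S : Finset α}
    (hS : S.Nonempty) (h : ∀ x ∈ S, ∃ n, P x n) :
    ∃ x ∈ S, ∃ n, P x n ∧ ∀ y ∈ S, ∃ m ≤ n, P y m := by
  let b : α → ℕ := fun x => if hx : ∃ n, P x n then Nat.find hx else 0
  have hb : ∀ y ∈ S, P y (b y) := fun y hy => by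
    simp only [b, dif_pos (h y hy)]; exact Nat.find_spec (h y hy)
  obtain ⟨x, hx, hmax⟩ := S.exists_max_image b hS
  exact ⟨x, hx, b x, hb x hx, fun y hy => ⟨b y, hmax y hy, hb y hy⟩⟩

theorem card_filter_le_le_eq_interiorCount_add_two {V : Type} [Fintype V] [LinearOrder V]
    {u v : V} (huv : u < v) :
    (univ.filter fun x => u ≤ x ∧ x ≤ v).card = interiorCount u v + 2 := by
  have : (univ.filter fun x => u ≤ x ∧ x ≤ v) =
      insert u (insert v (univ.filter fun x => u < x ∧ x < v)) := by
    ext x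
    simp only [mem_filter, mem_insert, mem_univ, true_and]
    constructor
    · rintro ⟨h₁, h₂⟩
      rcases h₁.eq_or_lt with rfl | h₁
      · exact Or.inl rfl
      rcases h₂.eq_or_lt with rfl | h₂
      · exact Or.inr (Or.inl rfl)
      · exact Or.inr (Or.inr ⟨h₁, h₂⟩)
    · rintro (rfl | rfl | ⟨h₁, h₂⟩)
      exacts [⟨le_rfl, huv.le⟩, ⟨huv.le, le_rfl⟩, ⟨h₁.le, h₂.le⟩]
  rw [this, card_insert_of_notMem, card_insert_of_notMem]
  · rfl
  · simp
  · simp [huv.ne]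

section FlattenStep

variable {V W : Type} [Fintype V] [LinearOrder V] [Fintype W] [LinearOrder W]
  {G : SimpleGraph V} {u v : V} {H : SimpleGraph W} {φ : V → W} {w : ℕ → W}

def StemsFrom (u v : V) (φ : V → W) (w : ℕ → W) (e : Sym2 W) : Prop :=
  e = s(φ u, w 0) ∨ (∃ i, i + 1 ≤ interiorCount u v ∧ e = s(w i, w (i + 1))) ∨
    e = s(w (interiorCount u v), φ v)

/-- `IsFlattenStepWith` places `w i` right after the `(i + 1)`-st vertex of `[u, v]`: it asks
that `below u v φ w i` have `i + 1` elements. -/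
def below (u v : V) (φ : V → W) (w : ℕ → W) (i : ℕ) : Finset V :=
  univ.filter fun x => u ≤ x ∧ x ≤ v ∧ φ x < w i

namespace IsFlattenStepWith

theorem card_below (hf : IsFlattenStepWith G u v H φ w) {i : ℕ} (hi : i ≤ interiorCount u v) :
    (below u v φ w i).card = i + 1 :=
  hf.2.2.2.2.2.1 i hi

theorem strictMonoOn_w (hf : IsFlattenStepWith G u v H φ w) :
    StrictMonoOn w (Set.Iic (interiorCount u v)) := by
  intro i hi j hj hij
  by_contra! hle
  have hsub : below u v φ w j ⊆ below u v φ w i := by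
    intro x hx
    simp only [below, mem_filter] at hx ⊢
    exact ⟨hx.1, hx.2.1, hx.2.2.1, hx.2.2.2.trans_le hle⟩
  have := card_le_card hsub
  rw [hf.card_below hi, hf.card_below hj] at this
  omega

theorem map_left_lt_w_zero (hf : IsFlattenStepWith G u v H φ w) : φ u < w 0 := by
  obtain ⟨x, hx⟩ : (below u v φ w 0).Nonempty := by
    rw [← card_pos, hf.card_below (Nat.zero_le _)]; omega
  simp only [below, mem_filter] at hx
  exact (hf.2.2.1.monotone hx.2.1).trans_lt hx.2.2.2

theorem w_le_w (hf : IsFlattenStepWith G u v H φ w) {i j : ℕ} (hij : i ≤ j)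
    (hj : j ≤ interiorCount u v) : w i ≤ w j :=
  (hf.strictMonoOn_w.le_iff_le (hij.trans hj : i ≤ _) hj).2 hij

theorem left_mem_below (hf : IsFlattenStepWith G u v H φ w) {i : ℕ}
    (hi : i ≤ interiorCount u v) : u ∈ below u v φ w i := by
  simp only [below, mem_filter, mem_univ, true_and]
  exact ⟨le_rfl, hf.2.1.le, hf.map_left_lt_w_zero.trans_le (hf.w_le_w (Nat.zero_le _) hi)⟩

theorem w_last_lt_map_right (hf : IsFlattenStepWith G u v H φ w) :
    w (interiorCount u v) < φ v := by
  obtain ⟨m, hm, hmb⟩ : ∃ m ∈ univ.filter fun x => u ≤ x ∧ x ≤ v,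
      m ∉ below u v φ w (interiorCount u v) := by
    by_contra! h
    have := card_le_card h
    rw [card_filter_le_le_eq_interiorCount_add_two hf.2.1, hf.card_below le_rfl] at this
    omega
  simp only [below, mem_filter, mem_univ, true_and, not_and, not_lt] at hm hmb
  exact ((hmb hm.1 hm.2).lt_of_ne (hf.2.2.2.2.1 m _ le_rfl).symm).trans_le
    (hf.2.2.1.monotone hm.2)

theorem not_between_left (hf : IsFlattenStepWith G u v H φ w) {y : W} (h1 : φ u < y)
    (h2 : y < w 0) : False := by
  rcases hf.2.2.2.1 y with ⟨a, rfl⟩ | ⟨i, hi, rfl⟩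
  · have hua : u < a := hf.2.2.1.lt_iff_lt.mp h1
    have hav : a ≤ v := (hf.2.2.1.lt_iff_lt.mp <| h2.trans <|
      (hf.w_le_w (Nat.zero_le _) le_rfl).trans_lt hf.w_last_lt_map_right).le
    have ha : a ∈ below u v φ w 0 := by
      simp only [below, mem_filter, mem_univ, true_and]; exact ⟨hua.le, hav, h2⟩
    have := card_le_one.mp (hf.card_below (Nat.zero_le _)).le _ ha _
      (hf.left_mem_below (Nat.zero_le _))
    exact hua.ne' this
  · exact (hf.w_le_w (Nat.zero_le _) hi).not_gt h2

theorem not_between_right (hf : IsFlattenStepWith G u v H φ w) {y : W}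
    (h1 : w (interiorCount u v) < y) (h2 : y < φ v) : False := by
  rcases hf.2.2.2.1 y with ⟨a, rfl⟩ | ⟨i, hi, rfl⟩
  · have hav : a < v := hf.2.2.1.lt_iff_lt.mp h2
    have hua : u ≤ a := (hf.2.2.1.lt_iff_lt.mp <| hf.map_left_lt_w_zero.trans <|
      (hf.w_le_w (Nat.zero_le _) le_rfl).trans_lt h1).le
    have hsub : below u v φ w (interiorCount u v) ⊆
        ((univ.filter fun x => u ≤ x ∧ x ≤ v).erase a).erase v := by
      intro x hx
      simp only [below, mem_filter, mem_univ, true_and] at hx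
      simp only [mem_erase, mem_filter, mem_univ, true_and]
      refine ⟨?_, ?_, hx.1, hx.2.1⟩
      · rintro rfl; exact hf.w_last_lt_map_right.not_gt hx.2.2
      · rintro rfl; exact h1.not_gt hx.2.2
    have := card_le_card hsub
    rw [card_erase_of_mem (by simp [hav.ne', hf.2.1.le]),
      card_erase_of_mem (by simp [hua, hav.le]),
      card_filter_le_le_eq_interiorCount_add_two hf.2.1, hf.card_below le_rfl] at this
    omega
  · exact (hf.w_le_w hi le_rfl).not_gt h1

theorem exists_between_w (hf : IsFlattenStepWith G u v H φ w) {i : ℕ}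
    (hi : i + 1 ≤ interiorCount u v) :
    ∃ z, u < z ∧ z < v ∧ ∀ y, w i < y → y < w (i + 1) → y = φ z := by
  have hsub : below u v φ w i ⊆ below u v φ w (i + 1) := by
    intro x hx
    simp only [below, mem_filter] at hx ⊢
    exact ⟨hx.1, hx.2.1, hx.2.2.1, hx.2.2.2.trans_le (hf.w_le_w (Nat.le_succ i) hi)⟩
  obtain ⟨z, hz⟩ := card_eq_one.mp <| by
    rw [card_sdiff_of_subset hsub, hf.card_below hi, hf.card_below (by omega)]; omega
  have hzmem : z ∈ below u v φ w (i + 1) \ below u v φ w i := hz ▸ mem_singleton_self z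
  have hz_left : u < z := by
    refine lt_of_le_of_ne ?_ ?_
    · simp only [below, mem_sdiff, mem_filter] at hzmem; exact hzmem.1.2.1
    · rintro rfl; exact (mem_sdiff.mp hzmem).2 (hf.left_mem_below (by omega))
  have hz_right : z < v := by
    simp only [below, mem_sdiff, mem_filter, mem_univ, true_and] at hzmem
    exact hf.2.2.1.lt_iff_lt.mp <| hzmem.1.2.2.trans_le <|
      (hf.w_le_w hi le_rfl).trans hf.w_last_lt_map_right.le
  refine ⟨z, hz_left, hz_right, fun y h1 h2 => ?_⟩
  rcases hf.2.2.2.1 y with ⟨a, rfl⟩ | ⟨j, hj, rfl⟩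
  · suffices a ∈ below u v φ w (i + 1) \ below u v φ w i by
      rw [hz, mem_singleton] at this; rw [this]
    simp only [below, mem_sdiff, mem_filter, mem_univ, true_and, not_and, not_lt]
    refine ⟨⟨?_, ?_, h2⟩, fun _ _ => h1.le⟩
    · exact (hf.2.2.1.lt_iff_lt.mp <| hf.map_left_lt_w_zero.trans <|
        (hf.w_le_w (Nat.zero_le _) (by omega)).trans_lt h1).le
    · exact (hf.2.2.1.lt_iff_lt.mp <| h2.trans <|
        (hf.w_le_w hi le_rfl).trans_lt hf.w_last_lt_map_right).le
  · have := (hf.strictMonoOn_w.lt_iff_lt (Set.mem_Iic.2 (by omega)) hj).1 h1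
    have := (hf.strictMonoOn_w.lt_iff_lt hj (Set.mem_Iic.2 hi)).1 h2
    omega

theorem exists_forall_between_eq_map (hf : IsFlattenStepWith G u v H φ w) {e : Sym2 W}
    (he : StemsFrom u v φ w e) {y : W} (hy₁ : eL e < y) (hy₂ : y < eR e) :
    ∃ z, u < z ∧ z < v ∧ ∀ y', eL e < y' → y' < eR e → y' = φ z := by
  rcases he with rfl | ⟨i, hi, rfl⟩ | rfl
  · have hlt := hf.map_left_lt_w_zero
    simp only [eL_mk, eR_mk, min_eq_left hlt.le, max_eq_right hlt.le] at hy₁ hy₂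
    exact (hf.not_between_left hy₁ hy₂).elim
  · have hlt : w i < w (i + 1) :=
      hf.strictMonoOn_w (Set.mem_Iic.2 (by omega)) (Set.mem_Iic.2 hi) (Nat.lt_succ_self i)
    simpa only [eL_mk, eR_mk, min_eq_left hlt.le, max_eq_right hlt.le] using
      hf.exists_between_w hi
  · have hlt := hf.w_last_lt_map_right
    simp only [eL_mk, eR_mk, min_eq_left hlt.le, max_eq_right hlt.le] at hy₁ hy₂
    exact (hf.not_between_right hy₁ hy₂).elim

theorem map_notMem_of_stemsFrom (hf : IsFlattenStepWith G u v H φ w) {z : V} (hzu : z ≠ u)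
    (hzv : z ≠ v) {e : Sym2 W} (he : StemsFrom u v φ w e) : φ z ∉ e := by
  have hφw := hf.2.2.2.2.1 z
  rcases he with rfl | ⟨i, hi, rfl⟩ | rfl <;> rw [Sym2.mem_iff] <;> rintro (h | h)
  · exact hzu (hf.2.2.1.injective h)
  · exact hφw 0 (Nat.zero_le _) h
  · exact hφw i (by omega) h
  · exact hφw (i + 1) hi h
  · exact hφw _ le_rfl h
  · exact hzv (hf.2.2.1.injective h)

theorem stemsFrom_of_forall_map_ne (hf : IsFlattenStepWith G u v H φ w) {e : Sym2 W}
    (he : e ∈ H.edgeSet) (hnew : ∀ r ∈ G.edgeSet, r.map φ ≠ e) : StemsFrom u v φ w e := by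
  induction e using Sym2.ind with
  | _ a b =>
    rcases (hf.2.2.2.2.2.2 a b).1 he with ⟨x, y, hxy, -, h⟩ | h
    · exact (hnew s(x, y) hxy h.symm).elim
    · exact h

theorem exists_adj_of_mem_between (hf : IsFlattenStepWith G u v H φ w) {p q : Sym2 W}
    (hp : StemsFrom u v φ w p) (hq : StemsFrom u v φ w q ∨ ∃ r ∈ G.edgeSet, q = r.map φ)
    {x : W} (hxq : x ∈ q) (hx : eL p < x ∧ x < eR p) :
    ∃ z y, G.Adj z y ∧ q = s(φ z, φ y) ∧ eL p < φ z ∧ φ z < eR p := by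
  obtain ⟨z, hzu, hzv, hz⟩ := hf.exists_forall_between_eq_map hp hx.1 hx.2
  obtain rfl := hz x hx.1 hx.2
  rcases hq with hq | ⟨r, hr, rfl⟩
  · exact (hf.map_notMem_of_stemsFrom hzu.ne' hzv.ne hq hxq).elim
  obtain ⟨a, ha, hza⟩ := Sym2.mem_map.1 hxq
  obtain rfl := hf.2.2.1.injective hza
  refine ⟨a, Sym2.Mem.other ha, ?_, ?_, hx⟩
  · rw [← SimpleGraph.mem_edgeSet, Sym2.other_spec]; exact hr
  · rw [← Sym2.map_mk, Sym2.other_spec]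

theorem adj_map_map_iff (hf : IsFlattenStepWith G u v H φ w) {a b : V} :
    H.Adj (φ a) (φ b) ↔ G.Adj a b ∧ s(a, b) ≠ s(u, v) := by
  have hφw := hf.2.2.2.2.1
  rw [hf.2.2.2.2.2.2]
  constructor
  · rintro (⟨x, y, hxy, hne, h⟩ | h | ⟨i, hi, h⟩ | h)
    · rw [← Sym2.map_mk, ← Sym2.map_mk] at h
      have hab := Sym2.map.injective hf.2.2.1.injective h
      rw [← SimpleGraph.mem_edgeSet, hab]
      exact ⟨hxy, hne⟩
    all_goals
      rcases Sym2.eq_iff.1 h with ⟨h₁, h₂⟩ | ⟨h₁, h₂⟩ <;>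
        first
        | exact (hφw _ _ (by omega) h₂).elim
        | exact (hφw _ _ (by omega) h₁).elim
  · exact fun h => Or.inl ⟨a, b, h.1, h.2, rfl⟩

theorem not_adj_map_left_right (hf : IsFlattenStepWith G u v H φ w) : ¬ H.Adj (φ u) (φ v) :=
  fun h => (hf.adj_map_map_iff.1 h).2 rfl

theorem adj_map_w (hf : IsFlattenStepWith G u v H φ w) {a : V} {i : ℕ}
    (hi : i ≤ interiorCount u v) (h : H.Adj (φ a) (w i)) :
    (a = u ∧ i = 0) ∨ (a = v ∧ i = interiorCount u v) := by
  have hφw := hf.2.2.2.2.1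
  have hw := hf.strictMonoOn_w.injOn
  rcases (hf.2.2.2.2.2.2 _ _).1 h with ⟨x, y, -, -, h⟩ | h | ⟨j, hj, h⟩ | h <;>
    rcases Sym2.eq_iff.1 h with ⟨h₁, h₂⟩ | ⟨h₁, h₂⟩
  · exact (hφw y i hi h₂.symm).elim
  · exact (hφw x i hi h₂.symm).elim
  · exact Or.inl ⟨hf.2.2.1.injective h₁,
      hw (Set.mem_Iic.2 hi) (Set.mem_Iic.2 (Nat.zero_le _)) h₂⟩
  · exact (hφw a 0 (Nat.zero_le _) h₁).elim
  · exact (hφw a j (by omega) h₁).elim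
  · exact (hφw a (j + 1) hj h₁).elim
  · exact (hφw a _ le_rfl h₁).elim
  · exact Or.inr ⟨hf.2.2.1.injective h₁, hw (Set.mem_Iic.2 hi) (Set.mem_Iic.2 le_rfl) h₂⟩

theorem adj_w_w (hf : IsFlattenStepWith G u v H φ w) {i j : ℕ} (hi : i ≤ interiorCount u v)
    (hj : j ≤ interiorCount u v) (h : H.Adj (w i) (w j)) : j = i + 1 ∨ i = j + 1 := by
  have hφw := hf.2.2.2.2.1
  have hw := hf.strictMonoOn_w.injOn
  rcases (hf.2.2.2.2.2.2 _ _).1 h with ⟨x, y, -, -, h⟩ | h | ⟨k, hk, h⟩ | h <;>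
    rcases Sym2.eq_iff.1 h with ⟨h₁, h₂⟩ | ⟨h₁, h₂⟩
  · exact (hφw x i hi h₁.symm).elim
  · exact (hφw y i hi h₁.symm).elim
  · exact (hφw u i hi h₁.symm).elim
  · exact (hφw u j hj h₂.symm).elim
  · have := hw (Set.mem_Iic.2 hi) (Set.mem_Iic.2 (by omega)) h₁
    have := hw (Set.mem_Iic.2 hj) (Set.mem_Iic.2 hk) h₂
    omega
  · have := hw (Set.mem_Iic.2 hi) (Set.mem_Iic.2 hk) h₁
    have := hw (Set.mem_Iic.2 hj) (Set.mem_Iic.2 (by omega)) h₂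
    omega
  · exact (hφw v j hj h₂.symm).elim
  · exact (hφw v i hi h₁.symm).elim

theorem card_adj_map_le (hf : IsFlattenStepWith G u v H φ w) (a : V) :
    (univ.filter fun y => H.Adj (φ a) y).card ≤ (univ.filter fun b => G.Adj a b).card := by
  let g : V → W := fun b =>
    if s(a, b) = s(u, v) then (if a = u then w 0 else w (interiorCount u v)) else φ b
  refine (card_le_card fun y hy => ?_).trans (card_image_le (f := g))
  simp only [mem_filter, mem_univ, true_and, mem_image] at hy ⊢
  rcases hf.2.2.2.1 y with ⟨b, rfl⟩ | ⟨i, hi, rfl⟩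
  · obtain ⟨hab, hne⟩ := hf.adj_map_map_iff.1 hy
    exact ⟨b, hab, if_neg hne⟩
  · rcases hf.adj_map_w hi hy with ⟨rfl, rfl⟩ | ⟨rfl, rfl⟩
    · exact ⟨v, hf.1, by simp [g]⟩
    · exact ⟨u, hf.1.symm, by simp [g, hf.2.1.ne']⟩

theorem card_adj_w_le (hf : IsFlattenStepWith G u v H φ w) {i : ℕ}
    (hi : i ≤ interiorCount u v) : (univ.filter fun y => H.Adj (w i) y).card ≤ 2 := by
  refine (card_le_card fun y hy => ?_).trans (card_le_two (a := if i = 0 then φ u else w (i - 1))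
    (b := if i = interiorCount u v then φ v else w (i + 1)))
  simp only [mem_filter, mem_univ, true_and] at hy
  simp only [mem_insert, mem_singleton]
  rcases hf.2.2.2.1 y with ⟨b, rfl⟩ | ⟨j, hj, rfl⟩
  · rcases hf.adj_map_w hi hy.symm with ⟨rfl, rfl⟩ | ⟨rfl, rfl⟩ <;> simp
  · rcases hf.adj_w_w hi hj hy with rfl | rfl
    · right; simp [show i ≠ interiorCount u v by omega]
    · left; simp

theorem card_adj_le_max (hf : IsFlattenStepWith G u v H φ w) {D : ℕ}
    (hG : ∀ a, (univ.filter fun b => G.Adj a b).card ≤ D) (x : W) :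
    (univ.filter fun y => H.Adj x y).card ≤ max D 2 := by
  rcases hf.2.2.2.1 x with ⟨a, rfl⟩ | ⟨i, hi, rfl⟩
  · exact ((hf.card_adj_map_le a).trans (hG a)).trans (le_max_left _ _)
  · exact (hf.card_adj_w_le hi).trans (le_max_right _ _)

end IsFlattenStepWith
end FlattenStep
section Chain

variable {N : ℕ → ℕ} {Gs : ∀ i, SimpleGraph (Fin (N i))}
  {φs : ∀ i, Fin (N i) → Fin (N (i + 1))}

/-- The composite `φs (k - 1) ∘ ⋯ ∘ φs j`. -/
def chainMap (φs : ∀ i, Fin (N i) → Fin (N (i + 1))) {j k : ℕ} (h : j ≤ k) :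
    Fin (N j) → Fin (N k) :=
  fun x => Nat.leRecOn (C := fun i => Fin (N i)) h (fun {i} y => φs i y) x

theorem chainMap_self {j : ℕ} (h : j ≤ j) : chainMap φs h = id :=
  funext fun x => Nat.leRecOn_self (C := fun i => Fin (N i)) (next := fun {i} y => φs i y) x

theorem chainMap_succ {j k : ℕ} (h : j ≤ k) (h' : j ≤ k + 1) :
    chainMap φs h' = φs k ∘ chainMap φs h :=
  funext fun x => Nat.leRecOn_succ (C := fun i => Fin (N i)) (next := fun {i} y => φs i y) h x

theorem chainMap_trans {j k m : ℕ} (h₁ : j ≤ k) (h₂ : k ≤ m) (h : j ≤ m) :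
    chainMap φs h = chainMap φs h₂ ∘ chainMap φs h₁ :=
  funext fun x =>
    Nat.leRecOn_trans (C := fun i => Fin (N i)) (next := fun {i} y => φs i y) h₁ h₂ x

theorem chainMap_succ_left {j k : ℕ} (h : j + 1 ≤ k) (h' : j ≤ k) :
    chainMap φs h' = chainMap φs h ∘ φs j := by
  rw [chainMap_trans (Nat.le_succ j) h h', chainMap_succ le_rfl, chainMap_self, Function.comp_id]

theorem strictMono_chainMap {L : ℕ} (hφ : ∀ i < L, StrictMono (φs i)) {j k : ℕ}
    (h : j ≤ k) (hk : k ≤ L) : StrictMono (chainMap φs h) := by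
  induction k, h using Nat.le_induction with
  | base => rw [chainMap_self]; exact strictMono_id
  | succ k hjk ih => rw [chainMap_succ hjk]; exact (hφ k hk).comp (ih (by omega))

variable (Gs φs)

def Survives (j : ℕ) {k : ℕ} (p : Sym2 (Fin (N k))) : Prop :=
  ∀ m (hm : k ≤ m), m ≤ j → p.map (chainMap φs hm) ∈ (Gs m).edgeSet

def IsNewEdge (s : ℕ) (p : Sym2 (Fin (N (s + 1)))) : Prop :=
  p ∈ (Gs (s + 1)).edgeSet ∧ ∀ r ∈ (Gs s).edgeSet, r.map (φs s) ≠ p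

def BornAt (j : ℕ) (e : Sym2 (Fin (N j))) (s : ℕ) : Prop :=
  ∃ h : s + 1 ≤ j, ∃ p, IsNewEdge Gs φs s p ∧ Survives Gs φs j p ∧
    e = p.map (chainMap φs h)

variable {Gs φs}

theorem survives_self {k : ℕ} {p : Sym2 (Fin (N k))} (hp : p ∈ (Gs k).edgeSet) :
    Survives Gs φs k p := by
  intro m hkm hmk
  obtain rfl := le_antisymm hmk hkm
  rwa [chainMap_self, Sym2.map_id]

theorem Survives.succ {k j : ℕ} {p : Sym2 (Fin (N k))} (hp : Survives Gs φs j p)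
    (h : k ≤ j + 1) (hmem : p.map (chainMap φs h) ∈ (Gs (j + 1)).edgeSet) :
    Survives Gs φs (j + 1) p := by
  intro m hkm hm
  rcases hm.lt_or_eq with hm | rfl
  · exact hp m hkm (Nat.le_of_lt_succ hm)
  · exact hmem

theorem survives_zero_or_bornAt (j : ℕ) {e : Sym2 (Fin (N j))} (he : e ∈ (Gs j).edgeSet) :
    (∃ r, Survives Gs φs j r ∧ e = r.map (chainMap φs (Nat.zero_le j))) ∨
      ∃ s, BornAt Gs φs j e s := by
  induction j with
  | zero => exact Or.inl ⟨e, survives_self he, by rw [chainMap_self, Sym2.map_id, id]⟩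
  | succ j ih =>
    by_cases hnew : IsNewEdge Gs φs j e
    · refine Or.inr ⟨j, le_rfl, e, hnew, survives_self he, ?_⟩
      rw [chainMap_self, Sym2.map_id, id]
    obtain ⟨r, hr, rfl⟩ : ∃ r ∈ (Gs j).edgeSet, r.map (φs j) = e := by
      simpa [IsNewEdge, he] using hnew
    rcases ih hr with ⟨r₀, hr₀, rfl⟩ | ⟨s, hs, p, hp, hsurv, rfl⟩
    · have hmap : (r₀.map (chainMap φs (Nat.zero_le j))).map (φs j) =
          r₀.map (chainMap φs (Nat.zero_le (j + 1))) := by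
        rw [Sym2.map_map, chainMap_succ (Nat.zero_le j)]
      exact Or.inl ⟨r₀, hr₀.succ _ (hmap ▸ he), hmap⟩
    · have hmap : (p.map (chainMap φs hs)).map (φs j) =
          p.map (chainMap φs (hs.trans j.le_succ)) := by
        rw [Sym2.map_map, chainMap_succ hs]
      exact Or.inr ⟨s, hs.trans j.le_succ, p, hp, hsurv.succ _ (hmap ▸ he), hmap⟩

theorem BornAt.exists_ancestor {j s k : ℕ} {f : Sym2 (Fin (N j))} (hf : BornAt Gs φs j f s)
    (hs : s ≤ k) (hk : k + 1 ≤ j) :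
    ∃ q, f = q.map (chainMap φs hk) ∧
      (IsNewEdge Gs φs k q ∨ ∃ r ∈ (Gs k).edgeSet, q = r.map (φs k)) := by
  obtain ⟨hsj, p, hp, hsurv, rfl⟩ := hf
  rcases hs.lt_or_eq with hs | rfl
  · refine ⟨(p.map (chainMap φs hs)).map (φs k), ?_,
      Or.inr ⟨_, hsurv k hs (by omega), rfl⟩⟩
    rw [Sym2.map_map, Sym2.map_map, ← chainMap_succ_left hk (by omega), ← chainMap_trans]
  · exact ⟨p, rfl, Or.inl hp⟩

theorem chainMap_zero_apply {α : Type} {ψ : ∀ i, α → Fin (N i)}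
    (hψ : ∀ i, ψ (i + 1) = φs i ∘ ψ i) (j : ℕ) (a : α) :
    chainMap φs (Nat.zero_le j) (ψ 0 a) = ψ j a := by
  induction j with
  | zero => rw [chainMap_self, id]
  | succ j ih =>
    rw [chainMap_succ (Nat.zero_le j), Function.comp_apply, ih, hψ, Function.comp_apply]

theorem card_adj_le_max_of_chain {L D : ℕ} {ws : ∀ i, ℕ → Fin (N (i + 1))}
    (hflat : ∀ i < L, ∃ u v, IsFlattenStepWith (Gs i) u v (Gs (i + 1)) (φs i) (ws i))
    (h₀ : ∀ x, (univ.filter fun y => (Gs 0).Adj x y).card ≤ D) :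
    ∀ j ≤ L, ∀ x, (univ.filter fun y => (Gs j).Adj x y).card ≤ max D 2 := by
  intro j
  induction j with
  | zero => exact fun _ x => (h₀ x).trans (le_max_left _ _)
  | succ j ih =>
    intro hj x
    obtain ⟨u, v, hf⟩ := hflat j hj
    exact (hf.card_adj_le_max (ih (by omega)) x).trans (max_le le_rfl (le_max_right _ _))

theorem exists_bornAt_of_forall_flattened {n : ℕ} {G : SimpleGraph (Fin n)}
    {l : List (Fin n × Fin n)} {ψ : ∀ i, Fin n → Fin (N i)}
    {ws : ∀ i, ℕ → Fin (N (i + 1))}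
    (hcover : ∀ e ∈ G.edgeSet, e ∈ l.map fun e => s(e.1, e.2))
    (hsurj : Function.Surjective (ψ 0))
    (hadj : ∀ a b, (Gs 0).Adj (ψ 0 a) (ψ 0 b) → G.Adj a b)
    (hstep : ∀ (i : ℕ) (hi : i < l.length),
      IsFlattenStepWith (Gs i) (ψ i (l.get ⟨i, hi⟩).1) (ψ i (l.get ⟨i, hi⟩).2)
        (Gs (i + 1)) (φs i) (ws i))
    (hψ : ∀ i, ψ (i + 1) = φs i ∘ ψ i) {e : Sym2 (Fin (N l.length))}
    (he : e ∈ (Gs l.length).edgeSet) : ∃ s, BornAt Gs φs l.length e s := by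
  refine (survives_zero_or_bornAt _ he).resolve_left ?_
  rintro ⟨r, hr, -⟩
  have hr₀ : r ∈ (Gs 0).edgeSet := by
    simpa [chainMap_self] using hr 0 le_rfl (Nat.zero_le _)
  obtain ⟨x, y⟩ := r
  obtain ⟨a, rfl⟩ := hsurj x
  obtain ⟨b, rfl⟩ := hsurj y
  obtain ⟨_, hkl, hkab⟩ := List.mem_map.1 (hcover _ (G.mem_edgeSet.2 (hadj a b hr₀)))
  obtain ⟨⟨k, hk⟩, rfl⟩ := List.mem_iff_get.1 hkl
  have hsurvk := hr (k + 1) (Nat.zero_le _) hk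
  rw [Sym2.map_mk, chainMap_zero_apply hψ, chainMap_zero_apply hψ, hψ,
    SimpleGraph.mem_edgeSet] at hsurvk
  have hno := (hstep k hk).not_adj_map_left_right
  rcases Sym2.eq_iff.1 hkab with ⟨h₁, h₂⟩ | ⟨h₁, h₂⟩
  · rw [h₁, h₂] at hno; exact hno hsurvk
  · rw [h₁, h₂] at hno; exact hno hsurvk.symm

theorem card_le_of_forall_cross_bornAt {L σ : ℕ} {u v : Fin (N σ)}
    {w : ℕ → Fin (N (σ + 1))}
    (hflat : IsFlattenStepWith (Gs σ) u v (Gs (σ + 1)) (φs σ) w)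
    (hmono : ∀ i < L, StrictMono (φs i)) {D : ℕ}
    (hdeg : ∀ x, (univ.filter fun y => (Gs σ).Adj x y).card ≤ D)
    {e : Sym2 (Fin (N L))} (he : BornAt Gs φs L e σ) {Y : Finset (Sym2 (Fin (N L)))}
    (hY : ∀ f ∈ Y, (∃ s ≤ σ, BornAt Gs φs L f s) ∧ Cross e f) : Y.card ≤ D := by
  obtain ⟨hσ, p, hp, -, rfl⟩ := he
  have hpstem := hflat.stemsFrom_of_forall_map_ne hp.1 hp.2
  have hΦ := strictMono_chainMap hmono hσ le_rfl
  have key : ∀ f ∈ Y, ∃ z y, (Gs σ).Adj z y ∧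
      f = s(z, y).map (chainMap φs (Nat.le_of_succ_le hσ)) ∧
        eL p < φs σ z ∧ φs σ z < eR p := by
    intro f hf
    obtain ⟨⟨s, hs, hfs⟩, hcross⟩ := hY f hf
    obtain ⟨q, rfl, hq⟩ := hfs.exists_ancestor hs hσ
    obtain ⟨x, hxq, hx⟩ := ((cross_map_iff hΦ).1 hcross).exists_mem_between
    obtain ⟨z, y, hzy, rfl, hz⟩ := hflat.exists_adj_of_mem_between hpstem
      (hq.imp_left fun h => hflat.stemsFrom_of_forall_map_ne h.1 h.2) hxq hx
    exact ⟨z, y, hzy, by rw [chainMap_succ_left hσ, ← Sym2.map_map]; rfl, hz⟩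
  rcases Y.eq_empty_or_nonempty with rfl | ⟨f₀, hf₀⟩
  · simp
  have : Nonempty (Fin (N σ)) := ⟨u⟩
  choose! z y hzy hfzy hz using key
  obtain ⟨c, -, -, hc⟩ :=
    hflat.exists_forall_between_eq_map hpstem (hz f₀ hf₀).1 (hz f₀ hf₀).2
  have hzc : ∀ f ∈ Y, z f = c := fun f hf =>
    hflat.2.2.1.injective (hc _ (hz f hf).1 (hz f hf).2)
  calc Y.card ≤ (univ.filter fun y' => (Gs σ).Adj c y').card :=
        card_le_card_of_injOn y (fun f hf => by simpa [hzc f hf] using hzy f hf)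
          fun f hf g hg h => by rw [hfzy f hf, hfzy g hg, hzc f hf, hzc g hg, h]
    _ ≤ D := hdeg c

end Chain

theorem iterated_subdivision_no_Ktt_general
    (d : ℕ) (hd : 1 ≤ d) (n : ℕ) (G : SimpleGraph (Fin n))
    (hdeg : ∀ v, (Finset.univ.filter fun u => G.Adj v u).card ≤ d)
    (l : List (Fin n × Fin n))
    (hcover : ∀ e : Sym2 (Fin n), e ∈ G.edgeSet ↔ e ∈ l.map fun e => s(e.1, e.2))
    (N : ℕ → ℕ) (Gs : ∀ i : ℕ, SimpleGraph (Fin (N i)))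
    (ψ : ∀ i : ℕ, Fin n → Fin (N i))
    (φs : ∀ i : ℕ, Fin (N i) → Fin (N (i + 1)))
    (ws : ∀ i : ℕ, ℕ → Fin (N (i + 1)))
    (hbase : StrictMono (ψ 0) ∧ Function.Surjective (ψ 0) ∧
      ∀ a b, G.Adj a b ↔ (Gs 0).Adj (ψ 0 a) (ψ 0 b))
    (hstep : ∀ (i : ℕ) (hi : i < l.length),
      IsFlattenStepWith (Gs i) (ψ i (l.get ⟨i, hi⟩).1) (ψ i (l.get ⟨i, hi⟩).2)
        (Gs (i + 1)) (φs i) (ws i))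
    (hpsi : ∀ i : ℕ, ψ (i + 1) = φs i ∘ ψ i) :
    ¬ OvHasKtt (Gs l.length) (2 * d + 2) := by
  rintro ⟨A, B, hA, hB, -, hcardA, hcardB, hAB⟩
  have hadj₀ : ∀ a b, (Gs 0).Adj (ψ 0 a) (ψ 0 b) → G.Adj a b := fun a b => (hbase.2.2 a b).2
  have hdegree := card_adj_le_max_of_chain (fun i hi => ⟨_, _, hstep i hi⟩) fun x => by
    obtain ⟨a, rfl⟩ := hbase.2.1 x
    exact (card_adj_map_le_of_surjective hbase.2.1 hadj₀ a).trans (hdeg a)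
  have hborn : ∀ e ∈ A ∪ B, ∃ s, BornAt Gs φs l.length e s := fun e he =>
    exists_bornAt_of_forall_flattened (fun e => (hcover e).1) hbase.2.1 hadj₀ hstep hpsi <| by
      rcases mem_union.1 he with h | h
      exacts [hA h, hB h]
  have hAB_ne : (A ∪ B).Nonempty := (card_pos.1 (by omega : 0 < A.card)).mono subset_union_left
  obtain ⟨e, he, σ, heσ, hlast⟩ := exists_max_of_forall_exists hAB_ne hborn
  obtain ⟨Y, hYAB, hYcard, hY⟩ :
      ∃ Y ⊆ A ∪ B, Y.card = 2 * d + 2 ∧ ∀ f ∈ Y, Cross e f := by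
    rcases mem_union.1 he with h | h
    · exact ⟨B, subset_union_right, hcardB, hAB e h⟩
    · exact ⟨A, subset_union_left, hcardA, fun f hf => (hAB f hf e h).symm⟩
  obtain ⟨hσ, -⟩ := id heσ
  have := card_le_of_forall_cross_bornAt (hstep σ hσ) (fun i hi => (hstep i hi).2.2.1)
    (hdegree σ (Nat.le_of_succ_le hσ)) heσ fun f hf => ⟨hlast f (hYAB hf), hY f hf⟩
  omega

/-- Any iterated subdivision of an ordered graph of maximum degree at most `d` (flattening
all edges of `G` one after the other along a chain of flatten steps) has an overlap graph
with no `K_{2d+2,2d+2}` subgraph. -/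
theorem iterated_subdivision_no_Ktt
    (d : ℕ) (hd : 1 ≤ d) (n : ℕ) (G : SimpleGraph (Fin n))
    (hdeg : ∀ v, (Finset.univ.filter fun u => G.Adj v u).card ≤ d)
    (l : List (Fin n × Fin n))
    (hnodup : (l.map fun e => s(e.1, e.2)).Nodup)
    (hcover : ∀ e : Sym2 (Fin n), e ∈ G.edgeSet ↔ e ∈ l.map fun e => s(e.1, e.2))
    (N : ℕ → ℕ) (Gs : ∀ i : ℕ, SimpleGraph (Fin (N i)))
    (ψ : ∀ i : ℕ, Fin n → Fin (N i))
    (φs : ∀ i : ℕ, Fin (N i) → Fin (N (i + 1)))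
    (ws : ∀ i : ℕ, ℕ → Fin (N (i + 1)))
    (hbase : StrictMono (ψ 0) ∧ Function.Surjective (ψ 0) ∧
      ∀ a b, G.Adj a b ↔ (Gs 0).Adj (ψ 0 a) (ψ 0 b))
    (hstep : ∀ (i : ℕ) (hi : i < l.length),
      IsFlattenStepWith (Gs i) (ψ i (l.get ⟨i, hi⟩).1) (ψ i (l.get ⟨i, hi⟩).2)
        (Gs (i + 1)) (φs i) (ws i))
    (hpsi : ∀ i : ℕ, ψ (i + 1) = φs i ∘ ψ i) :
    ¬ OvHasKtt (Gs l.length) (2 * d + 2) :=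
  iterated_subdivision_no_Ktt_general d hd n G hdeg l hcover N Gs ψ φs ws hbase hstep hpsi

end StretchPaper
end
end
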